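/- The set P = ℝ² × Ψ, where Ψ is the positive orthant of the unit sphere in L²([0,1],ℝ), forms a group under (ξ₁,θ₁,ψ₁)·(ξ₂,θ₂,ψ₂) = (ξ₁+ξ₂, θ₁+θ₂, (ψ₁ ∘ Γ(ψ₂))·ψ₂) where Γ(ψ₂)(t) = ∫₀ᵗ ψ₂(s)² ds, with identity (0,0,1) and inverse (ξ,θ,ψ)⁻¹ = (−ξ,−θ, (1/ψ) ∘ Γ(ψ)⁻¹ appropriately interpreted), i.e., the group axioms hold. -/
import Mathlib


open MeasureTheory

/-- Ψ: (continuous representatives of) the positive orthant of the unit sphere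
    of L²([0,1],ℝ). -/
def PsiProp (ψ : ℝ → ℝ) : Prop :=
  Continuous ψ ∧ (∀ t, 0 < ψ t) ∧ ∫ t in (0:ℝ)..1, (ψ t) ^ 2 = 1

/-- Group law on P = ℝ² × Ψ:
    (ξ₁,θ₁,ψ₁)·(ξ₂,θ₂,ψ₂) = (ξ₁+ξ₂, θ₁+θ₂, (ψ₁ ∘ Γ(ψ₂))·ψ₂),
    where Γ(ψ)(t) = ∫₀ᵗ ψ(s)² ds. -/
noncomputable def Pmul (p₁ p₂ : ℝ × ℝ × (ℝ → ℝ)) : ℝ × ℝ × (ℝ → ℝ) :=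
  (p₁.1 + p₂.1, p₁.2.1 + p₂.2.1,
    fun t => p₁.2.2 (∫ s in (0:ℝ)..t, (p₂.2.2 s) ^ 2) * p₂.2.2 t)
lemma gamma_deriv {ψ : ℝ → ℝ} (hc : Continuous ψ) (t : ℝ) :
    HasDerivAt (fun u => ∫ s in (0:ℝ)..u, ψ s ^ 2) (ψ t ^ 2) t :=
  intervalIntegral.integral_hasDerivAt_right ((hc.pow 2).intervalIntegrable _ _)
    ((hc.pow 2).stronglyMeasurableAtFilter _ _) (hc.pow 2).continuousAt

lemma gamma_cont {ψ : ℝ → ℝ} (hc : Continuous ψ) :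
    Continuous (fun u => ∫ s in (0:ℝ)..u, ψ s ^ 2) :=
  continuous_iff_continuousAt.2 fun t => (gamma_deriv hc t).continuousAt

lemma gamma_mono {ψ : ℝ → ℝ} (hc : Continuous ψ) (hpos : ∀ t, 0 < ψ t) :
    StrictMono (fun u => ∫ s in (0:ℝ)..u, ψ s ^ 2) := by
  apply strictMono_of_deriv_pos
  intro x
  rw [(gamma_deriv hc x).deriv]
  exact pow_pos (hpos x) 2

lemma cov {ψ g : ℝ → ℝ} (hψ : Continuous ψ) (hg : Continuous g) (a b : ℝ) :
    ∫ s in a..b, g (∫ u in (0:ℝ)..s, ψ u ^ 2) * ψ s ^ 2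
      = ∫ u in (∫ u in (0:ℝ)..a, ψ u ^ 2)..(∫ u in (0:ℝ)..b, ψ u ^ 2), g u := by
  have h := intervalIntegral.integral_comp_smul_deriv
    (f := fun u => ∫ s in (0:ℝ)..u, ψ s ^ 2) (f' := fun s => ψ s ^ 2) (a := a) (b := b)
    (g := g) (fun x _ => gamma_deriv hψ x) (hψ.pow 2).continuousOn hg
  rw [← h]
  apply intervalIntegral.integral_congr
  intro x _
  simp [mul_comm]

lemma inverse_aux {ψ : ℝ → ℝ} (hψ : PsiProp ψ) :
    ∃ ψ' : ℝ → ℝ, PsiProp ψ' ∧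
      (∀ t ∈ Set.Icc (0:ℝ) 1, ψ (∫ s in (0:ℝ)..t, ψ' s ^ 2) * ψ' t = 1) ∧
      (∀ t ∈ Set.Icc (0:ℝ) 1, ψ' (∫ s in (0:ℝ)..t, ψ s ^ 2) * ψ t = 1) := by
  obtain ⟨hc, hpos, hint⟩ := hψ
  set Γ : ℝ → ℝ := fun u => ∫ s in (0:ℝ)..u, ψ s ^ 2 with hΓ
  have hΓc : Continuous Γ := gamma_cont hc
  have hΓm : StrictMono Γ := gamma_mono hc hpos
  have hΓ0 : Γ 0 = 0 := intervalIntegral.integral_same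
  have hΓ1 : Γ 1 = 1 := hint
  -- Γ maps Icc 0 1 into Icc 0 1
  have hmaps : ∀ x : Set.Icc (0:ℝ) 1, Γ x ∈ Set.Icc (0:ℝ) 1 := by
    rintro ⟨x, hx0, hx1⟩
    constructor
    · have := hΓm.monotone hx0; rwa [hΓ0] at this
    · have := hΓm.monotone hx1; rwa [hΓ1] at this
  have hsurj : ∀ y : Set.Icc (0:ℝ) 1, ∃ x : Set.Icc (0:ℝ) 1, Γ x = (y:ℝ) := by
    rintro ⟨y, hy⟩
    have := intermediate_value_Icc (zero_le_one) hΓc.continuousOn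
    rw [hΓ0, hΓ1] at this
    obtain ⟨x, hx, hxy⟩ := this hy
    exact ⟨⟨x, hx⟩, hxy⟩
  let F : Set.Icc (0:ℝ) 1 → Set.Icc (0:ℝ) 1 := fun x => ⟨Γ x, hmaps x⟩
  have hFbij : Function.Bijective F := by
    constructor
    · intro a b hab
      exact Subtype.ext (hΓm.injective (congrArg Subtype.val hab))
    · rintro y
      obtain ⟨x, hx⟩ := hsurj y
      exact ⟨x, Subtype.ext hx⟩
  let e : Set.Icc (0:ℝ) 1 ≃ Set.Icc (0:ℝ) 1 := Equiv.ofBijective F hFbij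
  have hFc : Continuous (e : Set.Icc (0:ℝ) 1 → Set.Icc (0:ℝ) 1) :=
    Continuous.subtype_mk (hΓc.comp continuous_subtype_val) _
  let h : Set.Icc (0:ℝ) 1 ≃ₜ Set.Icc (0:ℝ) 1 := Continuous.homeoOfEquivCompactToT2 (f := e) hFc
  let Γi : ℝ → ℝ := fun u => (h.symm (Set.projIcc 0 1 zero_le_one u) : ℝ)
  have hΓic : Continuous Γi :=
    continuous_subtype_val.comp (h.symm.continuous.comp continuous_projIcc)
  have hΓi_mem : ∀ u, Γi u ∈ Set.Icc (0:ℝ) 1 := fun u => (h.symm (Set.projIcc 0 1 zero_le_one u)).2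
  have hleft : ∀ s ∈ Set.Icc (0:ℝ) 1, Γi (Γ s) = s := by
    intro s hs
    have h1 : Set.projIcc 0 1 zero_le_one (Γ s) = ⟨Γ s, hmaps ⟨s, hs⟩⟩ :=
      Set.projIcc_of_mem _ (hmaps ⟨s, hs⟩)
    have h2 : (⟨Γ s, hmaps ⟨s, hs⟩⟩ : Set.Icc (0:ℝ) 1) = h ⟨s, hs⟩ := rfl
    show (h.symm (Set.projIcc 0 1 zero_le_one (Γ s)) : ℝ) = s
    rw [h1, h2, Homeomorph.symm_apply_apply]
  have hright : ∀ u ∈ Set.Icc (0:ℝ) 1, Γ (Γi u) = u := by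
    intro u hu
    have h1 : Set.projIcc 0 1 zero_le_one u = ⟨u, hu⟩ := Set.projIcc_of_mem _ hu
    show Γ ((h.symm (Set.projIcc 0 1 zero_le_one u) : Set.Icc (0:ℝ) 1) : ℝ) = u
    rw [h1]
    have := h.apply_symm_apply ⟨u, hu⟩
    calc Γ ((h.symm ⟨u, hu⟩ : Set.Icc (0:ℝ) 1) : ℝ)
        = ((h (h.symm ⟨u, hu⟩) : Set.Icc (0:ℝ) 1) : ℝ) := rfl
      _ = u := by rw [this]
  -- define ψ'
  refine ⟨fun u => (ψ (Γi u))⁻¹, ⟨?_, ?_, ?_⟩, ?_, ?_⟩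
  · exact (hc.comp hΓic).inv₀ fun u => (hpos (Γi u)).ne'
  · exact fun u => inv_pos.2 (hpos (Γi u))
  all_goals {
    have hg : Continuous fun u => ((ψ (Γi u))⁻¹) ^ 2 :=
      ((hc.comp hΓic).inv₀ fun u => (hpos (Γi u)).ne').pow 2
    have key : ∀ t ∈ Set.Icc (0:ℝ) 1,
        (∫ s in (0:ℝ)..t, ((ψ (Γi s))⁻¹) ^ 2) = Γi t := by
      intro t ht
      have hb := hΓi_mem t
      have hcov : ∫ s in (0:ℝ)..(Γi t), ((ψ (Γi (Γ s)))⁻¹) ^ 2 * ψ s ^ 2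
          = ∫ u in (Γ 0)..(Γ (Γi t)), ((ψ (Γi u))⁻¹) ^ 2 :=
        cov hc hg 0 (Γi t)
      rw [hΓ0, hright t ht] at hcov
      have h1 : ∫ s in (0:ℝ)..(Γi t), ((ψ (Γi (Γ s)))⁻¹) ^ 2 * ψ s ^ 2
          = ∫ s in (0:ℝ)..(Γi t), (1:ℝ) := by
        apply intervalIntegral.integral_congr
        intro s hs
        rw [Set.uIcc_of_le hb.1] at hs
        have hs' : s ∈ Set.Icc (0:ℝ) 1 := ⟨hs.1, le_trans hs.2 hb.2⟩
        show (ψ (Γi (Γ s)))⁻¹ ^ 2 * ψ s ^ 2 = 1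
        rw [hleft s hs', inv_pow, inv_mul_cancel₀ (pow_ne_zero 2 (hpos s).ne')]
      rw [h1] at hcov
      simp only [intervalIntegral.integral_const, smul_eq_mul, mul_one, sub_zero] at hcov
      exact hcov.symm
    have hΓi1 : Γi 1 = 1 := by
      calc Γi 1 = Γi (Γ 1) := by rw [hΓ1]
        _ = 1 := hleft 1 ⟨zero_le_one, le_refl 1⟩
    first
    | (show (∫ t in (0:ℝ)..1, ((ψ (Γi t))⁻¹) ^ 2) = 1
       rw [key 1 ⟨zero_le_one, le_refl 1⟩, hΓi1])
    | (intro t ht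
       first
       | (show ψ (∫ s in (0:ℝ)..t, ((ψ (Γi s))⁻¹) ^ 2) * (ψ (Γi t))⁻¹ = 1
          rw [key t ht]
          exact mul_inv_cancel₀ (hpos (Γi t)).ne')
       | (show (ψ (Γi (Γ t)))⁻¹ * ψ t = 1
          rw [hleft t ht]
          exact inv_mul_cancel₀ (hpos t).ne')) }

lemma gamma_prod {ψ₂ ψ₃ : ℝ → ℝ} (h₂ : Continuous ψ₂) (h₃ : Continuous ψ₃) (t : ℝ) :
    (∫ s in (0:ℝ)..t, (ψ₂ (∫ u in (0:ℝ)..s, ψ₃ u ^ 2) * ψ₃ s) ^ 2)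
      = ∫ u in (0:ℝ)..(∫ u in (0:ℝ)..t, ψ₃ u ^ 2), ψ₂ u ^ 2 := by
  have h := cov (ψ := ψ₃) (g := fun u => ψ₂ u ^ 2) h₃ (h₂.pow 2) 0 t
  rw [intervalIntegral.integral_same] at h
  rw [← h]
  apply intervalIntegral.integral_congr
  intro s _
  show (ψ₂ (∫ u in (0:ℝ)..s, ψ₃ u ^ 2) * ψ₃ s) ^ 2
      = ψ₂ (∫ u in (0:ℝ)..s, ψ₃ u ^ 2) ^ 2 * ψ₃ s ^ 2
  ring

/-- P = ℝ² × Ψ is a group under Pmul: closure, associativity (on [0,1]),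
    identity (0,0,1), and inverses. -/
theorem P_is_group :
    (∀ ψ₁ ψ₂, PsiProp ψ₁ → PsiProp ψ₂ →
      PsiProp (fun t => ψ₁ (∫ s in (0:ℝ)..t, (ψ₂ s) ^ 2) * ψ₂ t)) ∧
    PsiProp (fun _ => 1) ∧
    (∀ ξ₁ θ₁ ξ₂ θ₂ ξ₃ θ₃ : ℝ, ∀ ψ₁ ψ₂ ψ₃ : ℝ → ℝ,
      PsiProp ψ₁ → PsiProp ψ₂ → PsiProp ψ₃ →
        (Pmul (Pmul (ξ₁, θ₁, ψ₁) (ξ₂, θ₂, ψ₂)) (ξ₃, θ₃, ψ₃)).1 =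
          (Pmul (ξ₁, θ₁, ψ₁) (Pmul (ξ₂, θ₂, ψ₂) (ξ₃, θ₃, ψ₃))).1 ∧
        (Pmul (Pmul (ξ₁, θ₁, ψ₁) (ξ₂, θ₂, ψ₂)) (ξ₃, θ₃, ψ₃)).2.1 =
          (Pmul (ξ₁, θ₁, ψ₁) (Pmul (ξ₂, θ₂, ψ₂) (ξ₃, θ₃, ψ₃))).2.1 ∧
        ∀ t ∈ Set.Icc (0:ℝ) 1,
          (Pmul (Pmul (ξ₁, θ₁, ψ₁) (ξ₂, θ₂, ψ₂)) (ξ₃, θ₃, ψ₃)).2.2 t =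
            (Pmul (ξ₁, θ₁, ψ₁) (Pmul (ξ₂, θ₂, ψ₂) (ξ₃, θ₃, ψ₃))).2.2 t) ∧
    (∀ ξ θ : ℝ, ∀ ψ : ℝ → ℝ, PsiProp ψ →
      (Pmul (ξ, θ, ψ) (0, 0, fun _ => 1)).1 = ξ ∧
      (Pmul (ξ, θ, ψ) (0, 0, fun _ => 1)).2.1 = θ ∧
      (∀ t ∈ Set.Icc (0:ℝ) 1, (Pmul (ξ, θ, ψ) (0, 0, fun _ => 1)).2.2 t = ψ t) ∧
      (Pmul (0, 0, fun _ => 1) (ξ, θ, ψ)).1 = ξ ∧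
      (Pmul (0, 0, fun _ => 1) (ξ, θ, ψ)).2.1 = θ ∧
      (∀ t ∈ Set.Icc (0:ℝ) 1, (Pmul (0, 0, fun _ => 1) (ξ, θ, ψ)).2.2 t = ψ t)) ∧
    (∀ ξ θ : ℝ, ∀ ψ : ℝ → ℝ, PsiProp ψ →
      ∃ ψ' : ℝ → ℝ, PsiProp ψ' ∧
        (Pmul (ξ, θ, ψ) (-ξ, -θ, ψ')).1 = 0 ∧
        (Pmul (ξ, θ, ψ) (-ξ, -θ, ψ')).2.1 = 0 ∧
        (∀ t ∈ Set.Icc (0:ℝ) 1, (Pmul (ξ, θ, ψ) (-ξ, -θ, ψ')).2.2 t = 1) ∧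
        (∀ t ∈ Set.Icc (0:ℝ) 1, (Pmul (-ξ, -θ, ψ') (ξ, θ, ψ)).2.2 t = 1)) := by
  refine ⟨?_, ?_, ?_, ?_, ?_⟩
  · -- closure
    rintro ψ₁ ψ₂ ⟨h₁c, h₁p, h₁i⟩ ⟨h₂c, h₂p, h₂i⟩
    refine ⟨(h₁c.comp (gamma_cont h₂c)).mul h₂c, fun t => mul_pos (h₁p _) (h₂p _), ?_⟩
    show (∫ t in (0:ℝ)..1, (ψ₁ (∫ s in (0:ℝ)..t, ψ₂ s ^ 2) * ψ₂ t) ^ 2) = 1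
    rw [gamma_prod h₁c h₂c 1, h₂i, h₁i]
  · -- identity element is in Ψ
    exact ⟨continuous_const, fun _ => one_pos, by simp⟩
  · -- associativity
    rintro ξ₁ θ₁ ξ₂ θ₂ ξ₃ θ₃ ψ₁ ψ₂ ψ₃ ⟨h₁c, _, _⟩ ⟨h₂c, _, _⟩ ⟨h₃c, _, _⟩
    refine ⟨by simp [Pmul, add_assoc], by simp [Pmul, add_assoc], ?_⟩
    intro t _
    show ψ₁ (∫ u in (0:ℝ)..(∫ s in (0:ℝ)..t, ψ₃ s ^ 2), ψ₂ u ^ 2) *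
          ψ₂ (∫ s in (0:ℝ)..t, ψ₃ s ^ 2) * ψ₃ t
        = ψ₁ (∫ s in (0:ℝ)..t, (ψ₂ (∫ u in (0:ℝ)..s, ψ₃ u ^ 2) * ψ₃ s) ^ 2) *
          (ψ₂ (∫ s in (0:ℝ)..t, ψ₃ s ^ 2) * ψ₃ t)
    rw [gamma_prod h₂c h₃c t, mul_assoc]
  · -- identity laws
    rintro ξ θ ψ ⟨hc, hp, hi⟩
    refine ⟨by simp [Pmul], by simp [Pmul], ?_, by simp [Pmul], by simp [Pmul], ?_⟩
    · intro t _
      show ψ (∫ s in (0:ℝ)..t, (1:ℝ) ^ 2) * 1 = ψ t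
      simp
    · intro t _
      show (1:ℝ) * ψ t = ψ t
      simp
  · -- inverses
    intro ξ θ ψ hψ
    obtain ⟨ψ', hψ', hid1, hid2⟩ := inverse_aux hψ
    refine ⟨ψ', hψ', by simp [Pmul], by simp [Pmul], ?_, ?_⟩
    · intro t ht; exact hid1 t ht
    · intro t ht; exact hid2 t ht
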